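/- Let T and S be bounded linear operators on a complex Hilbert space H. Then ‖ |T| |S| ‖ = ‖T S*‖, where |T| = (T*T)^{1/2} and ‖·‖ is the operator norm. -/

import Mathlib

/-! Since `|a| b` and `a b` have the same `star x * x`, the C*-identity gives `‖|a| b‖ = ‖a b‖`;
hence, taking adjoints in the middle, `‖|T| |S|‖ = ‖T |S|‖ = ‖|S| T*‖ = ‖S T*‖ = ‖T S*‖`. -/

set_option synthInstance.maxHeartbeats 1000000
open ContinuousLinearMap

lemma CStarRing.norm_eq_of_star_mul_self_eq {E : Type*} [NonUnitalNormedRing E] [StarRing E]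
    [CStarRing E] {x y : E} (h : star x * x = star y * y) : ‖x‖ = ‖y‖ := by
  rw [← sq_eq_sq₀ (norm_nonneg _) (norm_nonneg _), sq, sq, ← CStarRing.norm_star_mul_self,
    ← CStarRing.norm_star_mul_self, h]

namespace CFC

variable {A : Type*} [NonUnitalCStarAlgebra A] [PartialOrder A] [StarOrderedRing A]

lemma norm_abs_mul (a b : A) : ‖abs a * b‖ = ‖a * b‖ :=
  CStarRing.norm_eq_of_star_mul_self_eq <| by
    rw [star_mul, star_mul, (abs_nonneg a).star_eq, mul_assoc, ← mul_assoc (abs a),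
      abs_mul_abs, mul_assoc, mul_assoc]

lemma norm_mul_abs (a b : A) : ‖a * abs b‖ = ‖a * star b‖ := by
  rw [← norm_star, star_mul, (abs_nonneg b).star_eq, norm_abs_mul, ← norm_star, star_mul,
    star_star]

end CFC

theorem norm_abs_mul_abs {H : Type*} [NormedAddCommGroup H] [InnerProductSpace ℂ H]
    [CompleteSpace H] (T S : H →L[ℂ] H) :
    ‖CFC.sqrt (adjoint T * T) * CFC.sqrt (adjoint S * S)‖ = ‖T * adjoint S‖ := by
  rw [← star_eq_adjoint T, ← star_eq_adjoint S]
  exact (CFC.norm_abs_mul T (CFC.abs S)).trans (CFC.norm_mul_abs T S)
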